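/- arXiv:2504.05915 — 3 statements merged into one kernel-verified Lean document; each statement's English description precedes it below -/
import Mathlib

section
/- Let λ > 1 and v ∈ ℝⁿ with |v| ≥ 1. Then ∫₁^∞ ⟨t^{2λ−1} v⟩^{-2} dt ≤ C·|v|^{-2} for a constant C depending only on λ, where ⟨y⟩ = √(1+|y|²). -/
/-!
Since `(1 + x²)⁻¹ ≤ x⁻²`, the integrand is at most `|v|⁻² t^(2 - 4λ)`, and `t^(2 - 4λ)` is
integrable on `(1, ∞)` with integral `(4λ - 3)⁻¹` because `2 - 4λ < -1`.
-/

open MeasureTheory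

lemma inv_one_add_rpow_mul_sq_le {t s : ℝ} (p : ℝ) (ht : 0 < t) (hs : 0 < s) :
    (1 + (t ^ p * s) ^ 2)⁻¹ ≤ s ^ (-2 : ℝ) * t ^ (-2 * p) := calc
  (1 + (t ^ p * s) ^ 2)⁻¹ ≤ ((t ^ p * s) ^ 2)⁻¹ :=
    inv_anti₀ (by positivity) (le_add_of_nonneg_left zero_le_one)
  _ = s ^ (-2 : ℝ) * t ^ (-2 * p) := by
    rw [mul_pow, mul_inv, mul_comm, ← Real.rpow_natCast, ← Real.rpow_natCast,
      ← Real.rpow_mul ht.le, ← Real.rpow_neg hs.le, ← Real.rpow_neg ht.le]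
    ring_nf

lemma integral_Ioi_one_inv_one_add_rpow_mul_sq_le {p : ℝ} (hp : 1 / 2 < p) {s : ℝ}
    (hs : 0 < s) :
    ∫ t in Set.Ioi (1 : ℝ), (1 + (t ^ p * s) ^ 2)⁻¹ ≤ (2 * p - 1)⁻¹ * s ^ (-2 : ℝ) := by
  have hexp : -2 * p < -1 := by linarith
  have hmajorant : IntegrableOn (fun t : ℝ ↦ s ^ (-2 : ℝ) * t ^ (-2 * p)) (Set.Ioi 1) :=
    (integrableOn_Ioi_rpow_of_lt hexp one_pos).const_mul _
  calc ∫ t in Set.Ioi (1 : ℝ), (1 + (t ^ p * s) ^ 2)⁻¹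
      ≤ ∫ t in Set.Ioi (1 : ℝ), s ^ (-2 : ℝ) * t ^ (-2 * p) :=
        setIntegral_mono_of_nonneg (fun t _ ↦ by positivity)
          (fun t ht ↦ inv_one_add_rpow_mul_sq_le p (one_pos.trans ht) hs) hmajorant
    _ = (2 * p - 1)⁻¹ * s ^ (-2 : ℝ) := by
        rw [integral_const_mul, integral_Ioi_rpow_of_lt hexp one_pos, Real.one_rpow,
          show -2 * p + 1 = -(2 * p - 1) by ring, div_neg, neg_div, neg_neg, one_div,
          mul_comm]

theorem stmt12 (n : ℕ) (l : ℝ) (hl : 1 < l) :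
    ∃ C : ℝ, 0 < C ∧ ∀ v : EuclideanSpace ℝ (Fin n), 1 ≤ ‖v‖ →
      (∫ t in Set.Ioi (1:ℝ), (1 + (t ^ (2 * l - 1) * ‖v‖) ^ 2)⁻¹)
        ≤ C * ‖v‖ ^ (-2 : ℝ) := by
  have hp : 1 / 2 < 2 * l - 1 := by linarith
  refine ⟨(2 * (2 * l - 1) - 1)⁻¹, inv_pos.2 (by linarith), fun v hv ↦ ?_⟩
  exact integral_Ioi_one_inv_one_add_rpow_mul_sq_le hp (one_pos.trans_le hv)
end

section
/- Let ω > 0, σ > 0, λ = (1+√(1+4σ))/2, ρ with 1/λ < ρ < 1, and V : ℝⁿ → ℝ measurable with |V(y)| ≤ C⟨y⟩^{-ρ}. With α as in the previous context, the phase I_v = exp(−i ∫_{−∞}^{∞} V(α(t)v) dt) tends to 1 as |v| → ∞; equivalently, ∫_{−∞}^{∞} |V(α(t)v)| dt → 0 as |v| → ∞. -/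
/-!
Since `|V y| ≤ C ⟨y⟩^{-ρ}` and `⟨α(t) v⟩ = ⟨‖v‖ α(t)⟩`, the integral is at most
`C ∫ ⟨r α(t)⟩^{-ρ} dt` with `r = ‖v‖`, a quantity independent of `V`. It tends to `0` as `r → ∞`
by dominated convergence: for `r ≥ 1` the integrand is at most `⟨α(t)⟩^{-ρ} ≲ (1 + |t|)^{-lρ}`,
which is integrable because `lρ > 1`, and it tends to `0` wherever `α(t) ≠ 0`, i.e. for `t ≠ 0`.
-/

open MeasureTheory Filter Topology

theorem tendsto_integral_of_nonneg_of_le {ι X : Type*} {l : Filter ι} [MeasurableSpace X]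
    {μ : Measure X} {F G : ι → X → ℝ} (hF : ∀ i x, 0 ≤ F i x) (hFG : ∀ i x, F i x ≤ G i x)
    (hG : ∀ᶠ i in l, Integrable (G i) μ) (hlim : Tendsto (fun i => ∫ x, G i x ∂μ) l (𝓝 0)) :
    Tendsto (fun i => ∫ x, F i x ∂μ) l (𝓝 0) :=
  -- `F i` need not be integrable (or even measurable): otherwise its integral is `0`.
  squeeze_zero' (Eventually.of_forall fun i => integral_nonneg (hF i))
    (hG.mono fun i hi => integral_mono_of_nonneg (Eventually.of_forall (hF i)) hi
      (Eventually.of_forall (hFG i))) hlim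

section Bracket

theorem rpow_neg_sqrt_one_add_sq_mul_le {ρ r : ℝ} (hρ : 0 ≤ ρ) (hr : 1 ≤ r) (a : ℝ) :
    √(1 + (r * a) ^ 2) ^ (-ρ) ≤ √(1 + a ^ 2) ^ (-ρ) := by
  refine Real.rpow_le_rpow_of_nonpos (by positivity) (Real.sqrt_le_sqrt ?_) (by linarith)
  rw [mul_pow]
  nlinarith [mul_le_mul_of_nonneg_right (one_le_pow₀ (n := 2) hr) (sq_nonneg a)]

theorem tendsto_rpow_neg_sqrt_one_add_sq_mul_atTop {ρ a : ℝ} (hρ : 0 < ρ) (ha : a ≠ 0) :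
    Tendsto (fun r : ℝ => √(1 + (r * a) ^ 2) ^ (-ρ)) atTop (𝓝 0) := by
  have hsqrt : Tendsto (fun r : ℝ => √(1 + (r * a) ^ 2)) atTop atTop := by
    refine tendsto_atTop_mono (fun r => ?_) (tendsto_id.atTop_mul_const (abs_pos.mpr ha))
    calc r * |a| ≤ |r * a| := by rw [abs_mul]; gcongr; exact le_abs_self r
      _ ≤ √(1 + (r * a) ^ 2) := Real.abs_le_sqrt (by linarith)
  exact (tendsto_rpow_neg_atTop hρ).comp hsqrt

variable {X : Type*} [MeasurableSpace X] {μ : Measure X} {f : X → ℝ} {ρ : ℝ}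

theorem integrable_rpow_neg_sqrt_one_add_sq_mul (hρ : 0 ≤ ρ) (hf : AEMeasurable f μ)
    (hint : Integrable (fun x => √(1 + f x ^ 2) ^ (-ρ)) μ) {r : ℝ} (hr : 1 ≤ r) :
    Integrable (fun x => √(1 + (r * f x) ^ 2) ^ (-ρ)) μ :=
  hint.mono' (by fun_prop : AEMeasurable _ μ).aestronglyMeasurable <| ae_of_all _ fun x => by
    rw [Real.norm_of_nonneg (by positivity)]
    exact rpow_neg_sqrt_one_add_sq_mul_le hρ hr (f x)

theorem tendsto_integral_rpow_neg_sqrt_one_add_sq_mul (hρ : 0 < ρ) (hf : AEMeasurable f μ)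
    (hf0 : ∀ᵐ x ∂μ, f x ≠ 0) (hint : Integrable (fun x => √(1 + f x ^ 2) ^ (-ρ)) μ) :
    Tendsto (fun r : ℝ => ∫ x, √(1 + (r * f x) ^ 2) ^ (-ρ) ∂μ) atTop (𝓝 0) := by
  have hbound : ∀ᶠ r in atTop, ∀ᵐ x ∂μ,
      ‖√(1 + (r * f x) ^ 2) ^ (-ρ)‖ ≤ √(1 + f x ^ 2) ^ (-ρ) := by
    filter_upwards [eventually_ge_atTop 1] with r hr
    refine ae_of_all _ fun x => ?_
    rw [Real.norm_of_nonneg (by positivity)]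
    exact rpow_neg_sqrt_one_add_sq_mul_le hρ.le hr (f x)
  simpa only [integral_zero] using tendsto_integral_filter_of_dominated_convergence _
    (Eventually.of_forall fun r => (by fun_prop : AEMeasurable _ μ).aestronglyMeasurable)
    hbound hint (hf0.mono fun x hx => tendsto_rpow_neg_sqrt_one_add_sq_mul_atTop hρ hx)

end Bracket

noncomputable def alpha (ω l t : ℝ) : ℝ :=
  if |t| ≤ 1 then Real.sinh (ω * t) / ω
  else if 1 < t then t ^ l / (2 * l - 1) else -((-t) ^ l) / (2 * l - 1)

section Alpha

variable {ω l : ℝ}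

@[fun_prop]
theorem measurable_alpha (ω l : ℝ) : Measurable (alpha ω l) := by
  refine Measurable.ite (measurableSet_le measurable_abs measurable_const) (by fun_prop) ?_
  exact Measurable.ite (measurableSet_lt measurable_const measurable_id) (by fun_prop) (by fun_prop)

theorem abs_alpha_of_one_lt_abs (hl : 1 / 2 < l) {t : ℝ} (ht : 1 < |t|) :
    |alpha ω l t| = |t| ^ l / (2 * l - 1) := by
  have hc : 0 < 2 * l - 1 := by linarith
  rw [alpha, if_neg ht.not_ge]
  rcases lt_abs.mp ht with h | h
  · rw [if_pos h, abs_div, abs_of_pos hc, abs_of_pos (zero_lt_one.trans h),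
      abs_of_pos (Real.rpow_pos_of_pos (zero_lt_one.trans h) l)]
  · rw [if_neg (by linarith), abs_div, abs_of_pos hc, abs_of_neg (by linarith : t < 0), abs_neg,
      abs_of_pos (Real.rpow_pos_of_pos (by linarith) l)]

theorem alpha_ne_zero (hω : ω ≠ 0) (hl : 1 / 2 < l) {t : ℝ} (ht : t ≠ 0) : alpha ω l t ≠ 0 := by
  rcases le_or_gt |t| 1 with h | h
  · rw [alpha, if_pos h]
    exact div_ne_zero (Real.sinh_ne_zero.mpr (mul_ne_zero hω ht)) hω
  · rw [← abs_pos, abs_alpha_of_one_lt_abs hl h]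
    have := Real.rpow_pos_of_pos (zero_lt_one.trans h) l
    have : 0 < 2 * l - 1 := by linarith
    positivity

theorem one_add_abs_rpow_le_sqrt_one_add_alpha_sq (hl : 1 / 2 < l) (t : ℝ) :
    (1 + |t|) ^ l ≤ 2 ^ l * max 1 (2 * l - 1) * √(1 + alpha ω l t ^ 2) := by
  have hs : 1 ≤ √(1 + alpha ω l t ^ 2) := Real.one_le_sqrt.mpr (by nlinarith)
  have hsα : |alpha ω l t| ≤ √(1 + alpha ω l t ^ 2) := Real.abs_le_sqrt (by linarith)
  have h2l : 0 < (2 : ℝ) ^ l := by positivity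
  rcases le_or_gt |t| 1 with h | h
  · calc (1 + |t|) ^ l ≤ 2 ^ l := by gcongr; linarith
      _ = 2 ^ l * 1 * 1 := by ring
      _ ≤ 2 ^ l * max 1 (2 * l - 1) * √(1 + alpha ω l t ^ 2) := by gcongr; exact le_max_left _ _
  · have hc : 0 < 2 * l - 1 := by linarith
    calc (1 + |t|) ^ l ≤ (2 * |t|) ^ l := by gcongr; linarith
      _ = 2 ^ l * (2 * l - 1) * |alpha ω l t| := by
        rw [abs_alpha_of_one_lt_abs hl h, Real.mul_rpow zero_le_two (abs_nonneg t)]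
        field_simp
      _ ≤ 2 ^ l * max 1 (2 * l - 1) * √(1 + alpha ω l t ^ 2) := by
        gcongr
        exact le_max_right _ _

theorem integrable_rpow_neg_sqrt_one_add_alpha_sq (hl : 1 / 2 < l) {ρ : ℝ} (hlρ : 1 < l * ρ) :
    Integrable fun t => √(1 + alpha ω l t ^ 2) ^ (-ρ) := by
  set K : ℝ := 2 ^ l * max 1 (2 * l - 1)
  have hK : 0 < K := by positivity
  have hρ : 0 < ρ := pos_of_mul_pos_right (one_pos.trans hlρ) (by linarith)
  have hdom : Integrable fun t : ℝ => K ^ ρ * (1 + ‖t‖) ^ (-(l * ρ)) :=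
    (integrable_one_add_norm (by simpa using hlρ)).const_mul _
  refine hdom.mono' (by fun_prop : Measurable _).aestronglyMeasurable (ae_of_all _ fun t => ?_)
  rw [Real.norm_of_nonneg (by positivity), Real.norm_eq_abs]
  calc √(1 + alpha ω l t ^ 2) ^ (-ρ) ≤ ((1 + |t|) ^ l / K) ^ (-ρ) :=
        Real.rpow_le_rpow_of_nonpos (by positivity)
          ((div_le_iff₀' hK).mpr (one_add_abs_rpow_le_sqrt_one_add_alpha_sq hl t)) (by linarith)
    _ = K ^ ρ * (1 + |t|) ^ (-(l * ρ)) := by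
      rw [Real.div_rpow (by positivity) hK.le, ← Real.rpow_mul (by positivity),
        Real.rpow_neg hK.le, div_inv_eq_mul, mul_neg, mul_comm]

end Alpha

theorem stmt14_general (n : ℕ) (ω σ : ℝ) (hω : 0 < ω) (hσ : 0 < σ)
    (l : ℝ) (hl : l = (1 + Real.sqrt (1 + 4 * σ)) / 2)
    (ρ : ℝ) (hρl : 1 / l < ρ)
    (V : EuclideanSpace ℝ (Fin n) → ℝ)
    (C : ℝ) (hV : ∀ y, |V y| ≤ C * (Real.sqrt (1 + ‖y‖ ^ 2)) ^ (-ρ))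
    (α : ℝ → ℝ)
    (hα : ∀ t : ℝ, α t = if |t| ≤ 1 then Real.sinh (ω * t) / ω
      else if 1 < t then t ^ l / (2 * l - 1) else -((-t) ^ l) / (2 * l - 1)) :
    Tendsto (fun v : EuclideanSpace ℝ (Fin n) => ∫ t : ℝ, |V (α t • v)|)
      (comap norm atTop) (nhds 0) := by
  have hl_half : 1 / 2 < l := by
    have := Real.sqrt_pos.mpr (by linarith : (0 : ℝ) < 1 + 4 * σ)
    rw [hl]; linarith
  have hlρ : 1 < l * ρ := by
    rwa [div_lt_iff₀ (by linarith), mul_comm] at hρl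
  have hρ : 0 < ρ := pos_of_mul_pos_right (one_pos.trans hlρ) (by linarith)
  obtain rfl : α = alpha ω l := funext hα
  have hint := integrable_rpow_neg_sqrt_one_add_alpha_sq (ω := ω) hl_half hlρ
  have hlim := tendsto_integral_rpow_neg_sqrt_one_add_sq_mul hρ (measurable_alpha ω l).aemeasurable
    ((Measure.ae_ne volume 0).mono fun t ht => alpha_ne_zero hω.ne' hl_half ht) hint
  have hGlim : Tendsto (fun v : EuclideanSpace ℝ (Fin n) =>
      ∫ t, C * √(1 + (‖v‖ * alpha ω l t) ^ 2) ^ (-ρ)) (comap norm atTop) (𝓝 0) := by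
    simpa only [integral_const_mul, mul_zero, Function.comp_def] using
      (hlim.comp (tendsto_comap (f := (‖·‖)))).const_mul C
  refine tendsto_integral_of_nonneg_of_le (fun _ _ => abs_nonneg _) (fun v t => ?_) ?_ hGlim
  · simpa only [norm_smul, Real.norm_eq_abs, mul_pow, sq_abs, mul_comm] using hV (alpha ω l t • v)
  · filter_upwards [tendsto_comap.eventually (eventually_ge_atTop 1)] with v hv
    exact (integrable_rpow_neg_sqrt_one_add_sq_mul hρ.le (measurable_alpha ω l).aemeasurable
      hint hv).const_mul C

theorem stmt14 (n : ℕ) (ω σ : ℝ) (hω : 0 < ω) (hσ : 0 < σ)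
    (l : ℝ) (hl : l = (1 + Real.sqrt (1 + 4 * σ)) / 2)
    (ρ : ℝ) (hρl : 1 / l < ρ) (hρ1 : ρ < 1)
    (V : EuclideanSpace ℝ (Fin n) → ℝ) (hVmeas : Measurable V)
    (C : ℝ) (hV : ∀ y, |V y| ≤ C * (Real.sqrt (1 + ‖y‖ ^ 2)) ^ (-ρ))
    (α : ℝ → ℝ)
    (hα : ∀ t : ℝ, α t = if |t| ≤ 1 then Real.sinh (ω * t) / ω
      else if 1 < t then t ^ l / (2 * l - 1) else -((-t) ^ l) / (2 * l - 1)) :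
    Tendsto (fun v : EuclideanSpace ℝ (Fin n) => ∫ t : ℝ, |V (α t • v)|)
      (comap norm atTop) (nhds 0) :=
  stmt14_general n ω σ hω hσ l hl ρ hρl V C hV α hα
end

section
/- Let λ > 1, ρ > 1/λ, ρ ≤ 1/2, and v ∈ ℝⁿ with |v| ≥ 1. Then ∫₁^∞ t^λ ⟨t^λ v⟩^{-ρ-1} dt ≤ C·|v|^{-ρ-1} for a constant C depending only on λ and ρ, where ⟨y⟩ = √(1+|y|²). -/
/-! Since `⟨y⟩ ≥ |y|` and the exponent `-ρ - 1` is negative, the integrand is at most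
`|v|^(-ρ-1) t^(-λρ)`, which is integrable on `(1, ∞)` with integral `|v|^(-ρ-1) / (λρ - 1)`
because `λρ > 1`. -/

open MeasureTheory

namespace Real

lemma rpow_sqrt_one_add_sq_le_rpow {x s : ℝ} (hx : 0 < x) (hs : s ≤ 0) :
    √(1 + x ^ 2) ^ s ≤ x ^ s := by
  have hx_le : x ≤ √(1 + x ^ 2) := by
    simpa [abs_of_pos hx] using abs_le_sqrt (by linarith : x ^ 2 ≤ 1 + x ^ 2)
  exact rpow_le_rpow_of_nonpos hx hx_le hs

lemma rpow_mul_rpow_sqrt_one_add_sq_le {t a l ρ : ℝ} (ht : 0 < t) (ha : 0 < a) (hρ : -1 ≤ ρ) :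
    t ^ l * √(1 + (t ^ l * a) ^ 2) ^ (-ρ - 1) ≤ a ^ (-ρ - 1) * t ^ (-(l * ρ)) := by
  have htl : 0 < t ^ l := rpow_pos_of_pos ht l
  calc t ^ l * √(1 + (t ^ l * a) ^ 2) ^ (-ρ - 1)
      ≤ t ^ l * (t ^ l * a) ^ (-ρ - 1) := by
        gcongr ?_ * ?_
        exact rpow_sqrt_one_add_sq_le_rpow (mul_pos htl ha) (by linarith)
    _ = a ^ (-ρ - 1) * t ^ (-(l * ρ)) := by
        rw [mul_rpow htl.le ha.le, ← rpow_mul ht.le, ← mul_assoc, ← rpow_add ht,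
          show l + l * (-ρ - 1) = -(l * ρ) by ring, mul_comm]

lemma setIntegral_Ioi_one_rpow_mul_rpow_sqrt_le {a l ρ : ℝ} (ha : 0 < a) (hρ : -1 ≤ ρ)
    (hlρ : 1 < l * ρ) :
    ∫ t in Set.Ioi (1 : ℝ), t ^ l * √(1 + (t ^ l * a) ^ 2) ^ (-ρ - 1)
      ≤ 1 / (l * ρ - 1) * a ^ (-ρ - 1) := by
  have hexp : -(l * ρ) < -1 := by linarith
  have h_int : ∫ t in Set.Ioi (1 : ℝ), a ^ (-ρ - 1) * t ^ (-(l * ρ))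
      = 1 / (l * ρ - 1) * a ^ (-ρ - 1) := by
    rw [integral_const_mul, integral_Ioi_rpow_of_lt hexp one_pos, one_rpow,
      show -(l * ρ) + 1 = -(l * ρ - 1) by ring, neg_div_neg_eq, mul_comm]
  rw [← h_int]
  refine integral_mono_of_nonneg ?_ ((integrableOn_Ioi_rpow_of_lt hexp one_pos).const_mul _) ?_
  all_goals
    refine (ae_restrict_iff' measurableSet_Ioi).2 (Filter.Eventually.of_forall fun t ht => ?_)
    have ht0 : (0 : ℝ) < t := one_pos.trans ht
  · positivity
  · exact rpow_mul_rpow_sqrt_one_add_sq_le ht0 ha hρ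

end Real

theorem stmt15_general (n : ℕ) (l ρ : ℝ) (hl : 1 < l) (hρl : 1 / l < ρ) :
    ∃ C : ℝ, 0 < C ∧ ∀ v : EuclideanSpace ℝ (Fin n), 1 ≤ ‖v‖ →
      (∫ t in Set.Ioi (1:ℝ), t ^ l * (Real.sqrt (1 + (t ^ l * ‖v‖) ^ 2)) ^ (-ρ - 1))
        ≤ C * ‖v‖ ^ (-ρ - 1) := by
  have hl0 : 0 < l := one_pos.trans hl
  have hlρ : 1 < l * ρ := by rwa [div_lt_iff₀ hl0, mul_comm] at hρl
  have hρ : -1 ≤ ρ := by linarith [one_div_pos.2 hl0]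
  refine ⟨1 / (l * ρ - 1), one_div_pos.2 (by linarith), fun v hv => ?_⟩
  exact Real.setIntegral_Ioi_one_rpow_mul_rpow_sqrt_le (one_pos.trans_le hv) hρ hlρ

theorem stmt15 (n : ℕ) (l ρ : ℝ) (hl : 1 < l) (hρl : 1 / l < ρ) (hρ : ρ ≤ 1 / 2) :
    ∃ C : ℝ, 0 < C ∧ ∀ v : EuclideanSpace ℝ (Fin n), 1 ≤ ‖v‖ →
      (∫ t in Set.Ioi (1:ℝ), t ^ l * (Real.sqrt (1 + (t ^ l * ‖v‖) ^ 2)) ^ (-ρ - 1))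
        ≤ C * ‖v‖ ^ (-ρ - 1) :=
  stmt15_general n l ρ hl hρl
end
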